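/- In the 3-player zero-sum game H1(0) (i.e., H1(u) with u = 0, payoffs as specified), the only Nash equilibria are the pure strategy profiles (G,G,G) and (⊥,⊥,⊥). -/
import Mathlib


open Set

/-- Expected payoff in a 3-player game where each player has two actions
(`true` = G, `false` = ⊥), given the probabilities `p q r` of playing G. -/
noncomputable def exp3 (f : Bool → Bool → Bool → ℝ) (p q r : ℝ) : ℝ :=
  p*q*r * f true true true + p*q*(1-r) * f true true false +
  p*(1-q)*r * f true false true + p*(1-q)*(1-r) * f true false false +
  (1-p)*q*r * f false true true + (1-p)*q*(1-r) * f false true false +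
  (1-p)*(1-q)*r * f false false true + (1-p)*(1-q)*(1-r) * f false false false

/-- Payoff to player `i` in the game H1(u); `true` = G, `false` = ⊥. -/
noncomputable def H1 (u : ℝ) (i : Fin 3) (a b c : Bool) : ℝ :=
  match a, b, c with
  | true,  true,  true  => ![2*u, -u, -u] i
  | true,  true,  false => ![1, -1, 0] i
  | true,  false, true  => ![1, 0, -1] i
  | true,  false, false => ![-4, 2, 2] i
  | false, true,  true  => ![0, 0, 0] i
  | false, true,  false => ![2, -3, 1] i
  | false, false, true  => ![2, 1, -3] i
  | false, false, false => ![-2, 1, 1] i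

/-- `(p,q,r)` is a (mixed) Nash equilibrium of H1(u). -/
def H1NE (u p q r : ℝ) : Prop :=
  p ∈ Icc (0:ℝ) 1 ∧ q ∈ Icc (0:ℝ) 1 ∧ r ∈ Icc (0:ℝ) 1 ∧
  (∀ p' ∈ Icc (0:ℝ) 1, exp3 (H1 u 0) p' q r ≤ exp3 (H1 u 0) p q r) ∧
  (∀ q' ∈ Icc (0:ℝ) 1, exp3 (H1 u 1) p q' r ≤ exp3 (H1 u 1) p q r) ∧
  (∀ r' ∈ Icc (0:ℝ) 1, exp3 (H1 u 2) p q r' ≤ exp3 (H1 u 2) p q r)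

/-- The only Nash equilibria of H1(0) are the pure profiles (G,G,G) and (⊥,⊥,⊥). -/
theorem stmt1 (p q r : ℝ) :
    H1NE 0 p q r ↔ (p = 0 ∧ q = 0 ∧ r = 0) ∨ (p = 1 ∧ q = 1 ∧ r = 1) := by
  constructor
  · rintro ⟨⟨hp0, hp1⟩, ⟨hq0, hq1⟩, ⟨hr0, hr1⟩, h0, h1, h2⟩
    have F0 := h0 0 (by norm_num)
    have F1 := h1 0 (by norm_num)
    have F2 := h2 0 (by norm_num)
    simp [exp3, H1] at F0 F1 F2
    rcases eq_or_lt_of_le hp0 with hp | hp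
    · subst hp
      left
      have hq : q = 0 := le_antisymm (by nlinarith [mul_nonneg hq0 (show (0:ℝ) ≤ 4 - 3*r by linarith)]) hq0
      have hr : r = 0 := le_antisymm (by nlinarith [mul_nonneg hr0 (show (0:ℝ) ≤ 4 - 3*q by linarith)]) hr0
      exact ⟨rfl, hq, hr⟩
    · right
      have key : q + r = 2 := by
        by_contra hne
        have h2' : q + r < 2 := lt_of_le_of_ne (by linarith) hne
        nlinarith [mul_pos hp (show (0:ℝ) < 2 - (q + r) by linarith)]
      have hq : q = 1 := by linarith
      have hr : r = 1 := by linarith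
      subst hq; subst hr
      exact ⟨le_antisymm hp1 (by nlinarith), rfl, rfl⟩
  · rintro (⟨hp, hq, hr⟩ | ⟨hp, hq, hr⟩) <;> subst hp <;> subst hq <;> subst hr <;>
      refine ⟨by norm_num, by norm_num, by norm_num, ?_, ?_, ?_⟩ <;>
      rintro x ⟨hx0, hx1⟩ <;> simp [exp3, H1] <;> nlinarith
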